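/- arXiv:1504.07687 — 6 statements merged into one kernel-verified Lean document; each statement's English description precedes it below -/
import Mathlib

section
/- For any vector a ∈ ℝⁿ, the Khintchine constant K(a) = E_{x ~ uniform on {−1,1}ⁿ} |a · x| satisfies K(a) ≥ ‖a‖₂ / √2. -/
/-!
Let `f x = |a · x|` and expand `f` in the Walsh basis `χ_S x = ∏_{i ∈ S} x_i`. By Parseval,
`∑_S f̂(S)² = E f² = ‖a‖²`. The Walsh coefficients of `f - f ∘ (flip coordinate i)` are
`2 f̂(S)` for `i ∈ S` and `0` otherwise, and this difference is at most `2 |a_i|` in absolute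
value, so Parseval again gives `∑_S |S| f̂(S)² ≤ ‖a‖²`. As `f` is even, `f̂(S) = 0` whenever `|S|`
is odd, so `∑_{S ≠ ∅} f̂(S)² ≤ ½ ∑_S |S| f̂(S)² ≤ ‖a‖² / 2`, leaving `(E f)² = f̂(∅)² ≥ ‖a‖² / 2`.
-/

open Finset
open scoped symmDiff

namespace BooleanCube

def spin (b : Bool) : ℝ := if b then 1 else -1

@[simp] lemma spin_true : spin true = 1 := rfl

@[simp] lemma spin_false : spin false = -1 := rfl

lemma spin_not (b : Bool) : spin (!b) = -spin b := by cases b <;> simp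

lemma spin_mul_self (b : Bool) : spin b * spin b = 1 := by cases b <;> simp

lemma abs_spin (b : Bool) : |spin b| = 1 := by cases b <;> simp

lemma one_add_spin_mul_spin (b c : Bool) : 1 + spin b * spin c = if b = c then 2 else 0 := by
  cases b <;> cases c <;> norm_num

variable {ι : Type*}

def walsh (S : Finset ι) (x : ι → Bool) : ℝ := ∏ i ∈ S, spin (x i)

lemma walsh_compl (S : Finset ι) (x : ι → Bool) : walsh S xᶜ = (-1) ^ #S * walsh S x := by
  rw [walsh, walsh, ← prod_const, ← prod_mul_distrib]
  exact prod_congr rfl fun i _ => by simp [Bool.compl_eq_bnot, spin_not]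

section

variable [DecidableEq ι]

def flipAt (i : ι) (x : ι → Bool) : ι → Bool := Function.update x i (!x i)

lemma flipAt_involutive (i : ι) : Function.Involutive (flipAt i) := by
  intro x; ext j
  by_cases h : j = i
  · subst h; simp [flipAt]
  · simp [flipAt, h]

lemma spin_flipAt (i : ι) (x : ι → Bool) (j : ι) :
    spin (flipAt i x j) = (if j = i then -1 else 1) * spin (x j) := by
  by_cases h : j = i
  · subst h; simp [flipAt, spin_not]
  · simp [flipAt, h]

lemma walsh_flipAt (S : Finset ι) (i : ι) (x : ι → Bool) :
    walsh S (flipAt i x) = (if i ∈ S then -1 else 1) * walsh S x := by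
  simp_rw [walsh, spin_flipAt, prod_mul_distrib, prod_ite_eq']

end

section

variable [Fintype ι]

lemma sum_walsh_apply_mul_walsh_apply (x y : ι → Bool) :
    ∑ S, walsh S x * walsh S y = if x = y then 2 ^ Fintype.card ι else 0 := by
  simp_rw [walsh, ← prod_mul_distrib, ← powerset_univ, ← prod_one_add,
    one_add_spin_mul_spin]
  split_ifs with hxy
  · simp [hxy]
  · obtain ⟨i, hi⟩ := Function.ne_iff.1 hxy
    exact prod_eq_zero (mem_univ i) (if_neg hi)

variable [DecidableEq ι]

lemma walsh_eq_prod_univ (S : Finset ι) (x : ι → Bool) :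
    walsh S x = ∏ i, if i ∈ S then spin (x i) else 1 := by
  rw [prod_ite_mem, univ_inter, walsh]

lemma walsh_mul_walsh (S T : Finset ι) (x : ι → Bool) :
    walsh S x * walsh T x = walsh (S ∆ T) x := by
  simp only [walsh_eq_prod_univ, ← prod_mul_distrib]
  refine prod_congr rfl fun i _ => ?_
  by_cases hS : i ∈ S <;> by_cases hT : i ∈ T <;> simp [mem_symmDiff, hS, hT, spin_mul_self]

lemma sum_walsh (S : Finset ι) :
    ∑ x, walsh S x = if S = ∅ then 2 ^ Fintype.card ι else 0 := by
  have hcoord : ∀ i, ∑ b, (if i ∈ S then spin b else 1) = if i ∈ S then 0 else 2 := by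
    intro i; split_ifs <;> simp
  simp_rw [walsh_eq_prod_univ, ← Fintype.prod_sum (fun i b => if i ∈ S then spin b else 1),
    hcoord]
  split_ifs with hS
  · simp [hS]
  · obtain ⟨i, hi⟩ := nonempty_iff_ne_empty.2 hS
    exact prod_eq_zero (mem_univ i) (if_pos hi)

lemma sum_walsh_mul_walsh (S T : Finset ι) :
    ∑ x, walsh S x * walsh T x = if S = T then 2 ^ Fintype.card ι else 0 := by
  simp_rw [walsh_mul_walsh, sum_walsh, ← bot_eq_empty, symmDiff_eq_bot]

def walshCoeff (f : (ι → Bool) → ℝ) (S : Finset ι) : ℝ := ∑ x, f x * walsh S x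

theorem sum_walshCoeff_mul_walshCoeff (f g : (ι → Bool) → ℝ) :
    ∑ S, walshCoeff f S * walshCoeff g S = 2 ^ Fintype.card ι * ∑ x, f x * g x := by
  calc ∑ S, walshCoeff f S * walshCoeff g S
      = ∑ x, ∑ y, f x * g y * ∑ S, walsh S x * walsh S y := by
        simp_rw [walshCoeff, sum_mul_sum, mul_sum]
        rw [sum_comm]
        refine sum_congr rfl fun x _ => ?_
        rw [sum_comm]
        exact sum_congr rfl fun y _ => sum_congr rfl fun S _ => by ring
    _ = 2 ^ Fintype.card ι * ∑ x, f x * g x := by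
        simp_rw [sum_walsh_apply_mul_walsh_apply, mul_ite, mul_zero, sum_ite_eq,
          if_pos (mem_univ _), mul_sum]
        exact sum_congr rfl fun x _ => by ring

lemma walshCoeff_eq_zero_of_odd_card {f : (ι → Bool) → ℝ} (hf : ∀ x, f xᶜ = f x)
    {S : Finset ι} (hS : Odd #S) : walshCoeff f S = 0 := by
  have hneg : walshCoeff f S = -walshCoeff f S := by
    conv_lhs => rw [walshCoeff, ← Equiv.sum_comp (compl_involutive (α := ι → Bool)).toPerm]
    simp_rw [Function.Involutive.coe_toPerm, hf, walsh_compl, hS.neg_one_pow, walshCoeff,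
      ← sum_neg_distrib]
    exact sum_congr rfl fun x _ => by ring
  linarith

lemma two_mul_walshCoeff_sq_le {f : (ι → Bool) → ℝ} (hf : ∀ x, f xᶜ = f x)
    {S : Finset ι} (hS : S ≠ ∅) : 2 * walshCoeff f S ^ 2 ≤ #S * walshCoeff f S ^ 2 := by
  rcases Nat.even_or_odd #S with heven | hodd
  · have hcard : (2 : ℝ) ≤ #S := by
      obtain ⟨k, hk⟩ := heven
      have : #S ≠ 0 := card_ne_zero.2 (nonempty_iff_ne_empty.2 hS)
      exact_mod_cast (by omega : 2 ≤ #S)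
    exact mul_le_mul_of_nonneg_right hcard (sq_nonneg _)
  · simp [walshCoeff_eq_zero_of_odd_card hf hodd]

lemma walshCoeff_comp_flipAt (f : (ι → Bool) → ℝ) (i : ι) (S : Finset ι) :
    walshCoeff (fun x => f (flipAt i x)) S = (if i ∈ S then -1 else 1) * walshCoeff f S := by
  rw [walshCoeff, ← Equiv.sum_comp (flipAt_involutive i).toPerm]
  simp_rw [Function.Involutive.coe_toPerm, flipAt_involutive i _, walsh_flipAt, walshCoeff,
    mul_sum]
  exact sum_congr rfl fun x _ => by ring

lemma walshCoeff_sub_comp_flipAt (f : (ι → Bool) → ℝ) (i : ι) (S : Finset ι) :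
    walshCoeff (fun x => f x - f (flipAt i x)) S = if i ∈ S then 2 * walshCoeff f S else 0 := by
  have hsub : walshCoeff (fun x => f x - f (flipAt i x)) S
      = walshCoeff f S - walshCoeff (fun x => f (flipAt i x)) S := by
    simp_rw [walshCoeff, sub_mul, sum_sub_distrib]
  rw [hsub, walshCoeff_comp_flipAt]
  split_ifs <;> ring

theorem sum_card_mul_walshCoeff_sq (f : (ι → Bool) → ℝ) :
    4 * ∑ S, #S * walshCoeff f S ^ 2
      = 2 ^ Fintype.card ι * ∑ i, ∑ x, (f x - f (flipAt i x)) ^ 2 := by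
  have hparseval : ∀ i, ∑ S, (if i ∈ S then 2 * walshCoeff f S else 0) ^ 2
      = 2 ^ Fintype.card ι * ∑ x, (f x - f (flipAt i x)) ^ 2 := fun i => by
    simpa only [walshCoeff_sub_comp_flipAt, ← sq] using sum_walshCoeff_mul_walshCoeff
      (fun x => f x - f (flipAt i x)) (fun x => f x - f (flipAt i x))
  calc 4 * ∑ S, #S * walshCoeff f S ^ 2
      = ∑ i, ∑ S, (if i ∈ S then 2 * walshCoeff f S else 0) ^ 2 := by
        rw [sum_comm, mul_sum]
        refine sum_congr rfl fun S _ => ?_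
        simp only [ite_pow, ne_eq, OfNat.ofNat_ne_zero, not_false_eq_true, zero_pow, sum_ite_mem,
          univ_inter, sum_const, nsmul_eq_mul]
        ring
    _ = 2 ^ Fintype.card ι * ∑ i, ∑ x, (f x - f (flipAt i x)) ^ 2 := by
        rw [mul_sum]
        exact sum_congr rfl fun i _ => hparseval i

theorem poincare_of_compl_invariant {f : (ι → Bool) → ℝ} (hf : ∀ x, f xᶜ = f x) :
    8 * (2 ^ Fintype.card ι * ∑ x, f x ^ 2 - (∑ x, f x) ^ 2)
      ≤ 2 ^ Fintype.card ι * ∑ i, ∑ x, (f x - f (flipAt i x)) ^ 2 := by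
  have hparseval := sum_walshCoeff_mul_walshCoeff f f
  have hempty : walshCoeff f ∅ = ∑ x, f x := by simp [walshCoeff, walsh]
  simp_rw [← sq] at hparseval
  rw [← hparseval, ← sum_card_mul_walshCoeff_sq, ← hempty, ← add_sum_erase _ _ (mem_univ ∅),
    ← add_sum_erase _ _ (mem_univ ∅)]
  have hle : ∑ S ∈ univ.erase ∅, 2 * walshCoeff f S ^ 2
      ≤ ∑ S ∈ univ.erase ∅, #S * walshCoeff f S ^ 2 :=
    sum_le_sum fun S hS => two_mul_walshCoeff_sq_le hf (ne_of_mem_erase hS)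
  rw [← mul_sum] at hle
  simp only [card_empty, Nat.cast_zero, zero_mul, zero_add]
  linarith

end

variable [Fintype ι]

def rademacherSum (a : ι → ℝ) (x : ι → Bool) : ℝ := ∑ i, a i * spin (x i)

lemma rademacherSum_compl (a : ι → ℝ) (x : ι → Bool) :
    rademacherSum a xᶜ = -rademacherSum a x := by
  simp [rademacherSum, Bool.compl_eq_bnot, spin_not]

variable [DecidableEq ι]

lemma rademacherSum_sub_rademacherSum_flipAt (a : ι → ℝ) (i : ι) (x : ι → Bool) :
    rademacherSum a x - rademacherSum a (flipAt i x) = 2 * a i * spin (x i) := by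
  simp_rw [rademacherSum, ← sum_sub_distrib, spin_flipAt]
  rw [← Fintype.sum_ite_eq' i (fun j => 2 * a j * spin (x j))]
  refine sum_congr rfl fun j _ => ?_
  split_ifs <;> ring

lemma sum_rademacherSum_sq (a : ι → ℝ) :
    ∑ x, rademacherSum a x ^ 2 = 2 ^ Fintype.card ι * ∑ i, a i ^ 2 := by
  have hspin : ∀ (x : ι → Bool) i, spin (x i) = walsh {i} x :=
    fun x i => (prod_singleton _ _).symm
  simp_rw [rademacherSum, sq, sum_mul_sum, hspin]
  rw [sum_comm, mul_sum]
  refine sum_congr rfl fun i _ => ?_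
  rw [sum_comm]
  simp_rw [mul_mul_mul_comm (a i), ← mul_sum, sum_walsh_mul_walsh, singleton_inj, mul_ite,
    mul_zero, sum_ite_eq, if_pos (mem_univ _)]
  ring

theorem sq_two_pow_mul_sum_sq_le (a : ι → ℝ) :
    (2 ^ Fintype.card ι) ^ 2 * ∑ i, a i ^ 2 ≤ 2 * (∑ x, |rademacherSum a x|) ^ 2 := by
  have hsymm : ∀ x, |rademacherSum a xᶜ| = |rademacherSum a x| := fun x => by
    rw [rademacherSum_compl, abs_neg]
  have hsq : ∑ x, |rademacherSum a x| ^ 2 = 2 ^ Fintype.card ι * ∑ i, a i ^ 2 := by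
    simp_rw [sq_abs, sum_rademacherSum_sq]
  have hflip : ∀ i x, (|rademacherSum a x| - |rademacherSum a (flipAt i x)|) ^ 2 ≤ 4 * a i ^ 2 :=
    fun i x => calc
      _ ≤ (rademacherSum a x - rademacherSum a (flipAt i x)) ^ 2 :=
        sq_le_sq.2 (abs_abs_sub_abs_le_abs_sub _ _)
      _ = 4 * a i ^ 2 := by
        rw [rademacherSum_sub_rademacherSum_flipAt, mul_pow, ← sq_abs (spin _), abs_spin]
        ring
  have hinfluence : ∑ i, ∑ x, (|rademacherSum a x| - |rademacherSum a (flipAt i x)|) ^ 2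
      ≤ 2 ^ Fintype.card ι * (4 * ∑ i, a i ^ 2) := by
    calc _ ≤ ∑ i, ∑ _x : ι → Bool, 4 * a i ^ 2 :=
          sum_le_sum fun i _ => sum_le_sum fun x _ => hflip i x
      _ = _ := by simp [mul_sum]
  have hpoincare := poincare_of_compl_invariant (f := fun x => |rademacherSum a x|) hsymm
  rw [hsq] at hpoincare
  linarith [mul_le_mul_of_nonneg_left hinfluence (by positivity : (0 : ℝ) ≤ 2 ^ Fintype.card ι)]

end BooleanCube

/-- Khintchine's inequality: `K(a) ≥ ‖a‖₂ / √2`. -/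
theorem khintchine_ge_norm_div_sqrt_two (n : ℕ) (a : Fin n → ℝ) :
    Real.sqrt (∑ i, (a i) ^ 2) / Real.sqrt 2 ≤
      (∑ x : Fin n → Bool, |∑ i, a i * (if x i then 1 else -1)|) / 2 ^ n := by
  have hkey := BooleanCube.sq_two_pow_mul_sum_sq_le a
  rw [Fintype.card_fin] at hkey
  change _ ≤ (∑ x, |BooleanCube.rademacherSum a x|) / _
  rw [div_le_div_iff₀ (by positivity) (by positivity)]
  refine le_of_pow_le_pow_left₀ two_ne_zero (by positivity) ?_
  rw [mul_pow, mul_pow, Real.sq_sqrt (sum_nonneg fun i _ => sq_nonneg _),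
    Real.sq_sqrt zero_le_two]
  linarith
end

section
/- Let w ∈ ℤⁿ, set a₀ = (2w₁,…,2wₙ,0) ∈ ℝ^{n+1} and a₁ = (2w₁,…,2wₙ,1) ∈ ℝ^{n+1}. Then Pr_{x ~ uniform on {−1,1}ⁿ}[w · x = 0] = K(a₁) − K(a₀), where K(a) = E_{y ~ uniform on {−1,1}^{n+1}} |a · y|. -/
/-!
Split `y ∈ {±1}ⁿ⁺¹` into its first `n` coordinates `x` and its last sign. Since `a · y = 2 (w · x) ± c`
for `a = (2w, c)`, the sum defining `2ⁿ⁺¹ K(a)` becomes `∑ₓ (|2 w·x + c| + |2 w·x - c|)`. For an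
integer `s`, `|2s + 1| + |2s - 1|` exceeds `|2s| + |2s|` by `2` when `s = 0` and by `0` otherwise, so
`2ⁿ⁺¹ (K(a₁) - K(a₀))` counts each solution of `w · x = 0` twice.
-/

open Finset

def signSum {m : ℕ} (a : Fin m → ℝ) (y : Fin m → Bool) : ℝ :=
  ∑ i, a i * if y i then 1 else -1

lemma signSum_snoc {n : ℕ} (a : Fin n → ℝ) (c : ℝ) (x : Fin n → Bool) (b : Bool) :
    signSum (Fin.snoc a c) (Fin.snoc x b) = signSum a x + c * if b then 1 else -1 := by
  simp only [signSum, Fin.sum_univ_castSucc, Fin.snoc_castSucc, Fin.snoc_last]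

lemma sum_abs_signSum_snoc {n : ℕ} (a : Fin n → ℝ) (c : ℝ) :
    ∑ y, |signSum (Fin.snoc a c) y| = ∑ x, (|signSum a x + c| + |signSum a x - c|) := by
  rw [← (Fin.snocEquiv fun _ => Bool).sum_comp, Fintype.sum_prod_type, Fintype.sum_bool,
    ← sum_add_distrib]
  refine sum_congr rfl fun x _ => ?_
  change |signSum (Fin.snoc a c) (Fin.snoc x true)| + |signSum (Fin.snoc a c) (Fin.snoc x false)| = _
  simp [signSum_snoc, sub_eq_add_neg]

lemma abs_two_mul_add_one_add_abs_two_mul_sub_one_sub (s : ℤ) :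
    |2 * (s : ℝ) + 1| + |2 * (s : ℝ) - 1| - (|2 * (s : ℝ)| + |2 * (s : ℝ)|) =
      if s = 0 then 2 else 0 := by
  rcases lt_trichotomy s 0 with hs | rfl | hs
  · have hs' : (s : ℝ) ≤ -1 := by exact_mod_cast Int.le_sub_one_of_lt hs
    rw [if_neg hs.ne, abs_of_neg (by linarith), abs_of_neg (by linarith), abs_of_neg (by linarith)]
    ring
  · norm_num
  · have hs' : (1 : ℝ) ≤ s := by exact_mod_cast hs
    rw [if_neg hs.ne', abs_of_pos (by linarith), abs_of_pos (by linarith), abs_of_pos (by linarith)]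
    ring

lemma signSum_two_mul_intCast {n : ℕ} (w : Fin n → ℤ) (x : Fin n → Bool) :
    signSum (fun i => 2 * (w i : ℝ)) x = 2 * ((∑ i, w i * if x i then 1 else -1 : ℤ) : ℝ) := by
  simp only [signSum, Int.cast_sum, Int.cast_mul, Int.cast_ite, Int.cast_one, Int.cast_neg,
    mul_sum, mul_assoc]

/-- `Pr[w·x = 0] = K(a₁) − K(a₀)` where `a₀ = (2w,0)` and `a₁ = (2w,1)`. -/
theorem partition_prob_eq_khintchine_diff (n : ℕ) (w : Fin n → ℤ) :
    ((Finset.univ.filter fun x : Fin n → Bool =>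
        (∑ i, w i * (if x i then 1 else -1)) = 0).card : ℝ) / 2 ^ n =
      (∑ y : Fin (n + 1) → Bool,
          |∑ i : Fin (n + 1),
            (Fin.snoc (fun i : Fin n => 2 * (w i : ℝ)) 1) i * (if y i then 1 else -1)|) / 2 ^ (n + 1)
      - (∑ y : Fin (n + 1) → Bool,
          |∑ i : Fin (n + 1),
            (Fin.snoc (fun i : Fin n => 2 * (w i : ℝ)) 0) i * (if y i then 1 else -1)|) / 2 ^ (n + 1) := by
  change _ = (∑ y, |signSum _ y|) / _ - (∑ y, |signSum _ y|) / _
  rw [sum_abs_signSum_snoc, sum_abs_signSum_snoc, div_sub_div_same, ← sum_sub_distrib]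
  simp only [signSum_two_mul_intCast, add_zero, sub_zero,
    abs_two_mul_add_one_add_abs_two_mul_sub_one_sub]
  rw [sum_ite, sum_const_zero, add_zero, sum_const, nsmul_eq_mul, pow_succ]
  field_simp
end

section
/- Chow's theorem: Let h : {0,1}ⁿ → {0,1} be a halfspace, i.e., h(x) = sign⁺(a₀ + ∑_{i=1}^n aᵢ(−1)^{1+xᵢ}) for reals a₀,…,aₙ such that a₀ + ∑_{i=1}^n aᵢ(−1)^{1+xᵢ} ≠ 0 for all x ∈ {0,1}ⁿ. If f : {0,1}ⁿ → [0,1] has the same Chow parameters as h (f̂(i) = ĥ(i) for all 0 ≤ i ≤ n), then f = h. -/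
open Finset

/-! Let `L` be the affine form defining the halfspace `h`. It is a linear combination of the
constant function and the characters `(-1)^(1+xᵢ)`, whose correlations with a function are its
Chow parameters, so equal Chow parameters give
`∑ₓ (h x - f x) L x = 0`. Since `f` takes values in `[0, 1]` and `h = 1` exactly where `L ≥ 0`,
every summand is nonnegative, hence zero; as `L` never vanishes, `f = h`. -/

section

variable {α ι R : Type*} [Fintype α] [Fintype ι]

theorem sum_sub_mul_affine_eq_zero [CommRing R] (f h : α → R) (φ : ι → α → R) (c : R)
    (w : ι → R) (h0 : ∑ x, f x = ∑ x, h x) (hi : ∀ i, ∑ x, f x * φ i x = ∑ x, h x * φ i x) :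
    ∑ x, (h x - f x) * (c + ∑ i, w i * φ i x) = 0 := by
  calc ∑ x, (h x - f x) * (c + ∑ i, w i * φ i x)
      = c * (∑ x, h x - ∑ x, f x) +
          ∑ i, w i * (∑ x, h x * φ i x - ∑ x, f x * φ i x) := by
        simp only [mul_add, mul_sum, sum_add_distrib, ← sum_sub_distrib]
        rw [sum_comm]
        congr 1 <;> refine sum_congr rfl fun _ _ => ?_
        · ring
        · exact sum_congr rfl fun _ _ => by ring
    _ = 0 := by simp [h0, hi]

variable [Ring R] [LinearOrder R] [IsStrictOrderedRing R]

theorem threshold_sub_mul_nonneg {t y : R} (hy0 : 0 ≤ y) (hy1 : y ≤ 1) :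
    0 ≤ ((if 0 ≤ t then 1 else 0) - y) * t := by
  split_ifs with ht
  · exact mul_nonneg (sub_nonneg.2 hy1) ht
  · exact mul_nonneg_of_nonpos_of_nonpos (by rwa [zero_sub, neg_nonpos]) (le_of_not_ge ht)

theorem eq_of_sum_sub_mul_eq_zero {f h L : α → R} (hL : ∀ x, L x ≠ 0)
    (hnonneg : ∀ x, 0 ≤ (h x - f x) * L x) (hsum : ∑ x, (h x - f x) * L x = 0) : f = h := by
  funext x
  have hx := (sum_eq_zero_iff_of_nonneg fun x _ => hnonneg x).1 hsum x (mem_univ x)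
  exact (sub_eq_zero.1 ((mul_eq_zero.1 hx).resolve_right (hL x))).symm

end

/-- Chow's theorem: a bounded function with the same Chow parameters as a halfspace
(whose defining affine form never vanishes on the cube) equals that halfspace. -/
theorem chow_theorem (n : ℕ) (a : Fin (n + 1) → ℝ)
    (hnv : ∀ x : Fin n → Bool, a 0 + ∑ i : Fin n, a i.succ * (if x i then 1 else -1) ≠ 0)
    (h : (Fin n → Bool) → ℝ)
    (hh : ∀ x, h x =
      if 0 ≤ a 0 + ∑ i : Fin n, a i.succ * (if x i then 1 else -1) then 1 else 0)
    (f : (Fin n → Bool) → ℝ) (hf : ∀ x, 0 ≤ f x ∧ f x ≤ 1)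
    (h0 : (∑ x : Fin n → Bool, f x) / 2 ^ n = (∑ x : Fin n → Bool, h x) / 2 ^ n)
    (hi : ∀ i : Fin n,
      (∑ x : Fin n → Bool, f x * (if x i then 1 else -1)) / 2 ^ n =
        (∑ x : Fin n → Bool, h x * (if x i then 1 else -1)) / 2 ^ n) :
    f = h := by
  have h2n : (2 : ℝ) ^ n ≠ 0 := by positivity
  refine eq_of_sum_sub_mul_eq_zero hnv (fun x => ?_) ?_
  · rw [hh x]
    exact threshold_sub_mul_nonneg (hf x).1 (hf x).2
  · exact sum_sub_mul_affine_eq_zero f h (fun i x => if x i then 1 else -1) (a 0)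
      (fun i => a i.succ) ((div_left_inj' h2n).1 h0) fun i => (div_left_inj' h2n).1 (hi i)
end

section
/- In a single-item auction environment with n bidders having independent type distributions, for any ex post allocation rule x (choosing at most one winner per type profile) with induced interim allocation rule y, and any sets S₁ ⊆ V₁, …, Sₙ ⊆ Vₙ of distinguished types, the Border inequality holds: ∑_{i=1}^n ∑_{vᵢ ∈ Sᵢ} fᵢ(vᵢ)·yᵢ(vᵢ) ≤ 1 − ∏_{i=1}^n (1 − ∑_{vᵢ ∈ Sᵢ} fᵢ(vᵢ)). -/
/-!
Weight each type profile `v` by its probability `∏ i, f i (v i)`. Unfolding the interim rule,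
`∑ i, ∑ t ∈ S i, f i t * y i t` becomes the expectation over profiles of the total winning
probability of the bidders whose type is distinguished. Since at most one bidder wins, this is
at most the probability of a profile in which some bidder is distinguished, and by independence
the complementary event has probability `∏ i, (1 - ∑ t ∈ S i, f i t)`.
-/

open Finset

theorem sum_sum_filter_mul_le_sum_filter_exists {α ι : Type*} [Fintype α] [Fintype ι]
    (R : α → ι → Prop) [∀ a i, Decidable (R a i)] {p : α → ℝ} {x : α → ι → ℝ}
    (hp : ∀ a, 0 ≤ p a) (hx : ∀ a i, 0 ≤ x a i) (hx1 : ∀ a, ∑ i, x a i ≤ 1) :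
    ∑ i, ∑ a with R a i, p a * x a i ≤ ∑ a with ∃ i, R a i, p a := by
  have hwinner : ∀ a, ∑ i with R a i, p a * x a i ≤ p a := fun a => by
    rw [← mul_sum]
    exact mul_le_of_le_one_right (hp a) ((sum_le_sum_of_subset_of_nonneg (filter_subset _ _)
      fun i _ _ => hx a i).trans (hx1 a))
  calc ∑ i, ∑ a with R a i, p a * x a i = ∑ a, ∑ i with R a i, p a * x a i := by
        simp only [sum_filter]
        exact sum_comm
    _ = ∑ a with ∃ i, R a i, ∑ i with R a i, p a * x a i := by
        refine (sum_filter_of_ne fun a _ hne => ?_).symm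
        obtain ⟨i, hi, -⟩ := exists_ne_zero_of_sum_ne_zero hne
        exact ⟨i, (mem_filter.mp hi).2⟩
    _ ≤ ∑ a with ∃ i, R a i, p a := sum_le_sum fun a _ => hwinner a

section Profiles

variable {ι : Type*} [Fintype ι] [DecidableEq ι] {V : ι → Type*} [∀ i, Fintype (V i)]
  {f : ∀ i, V i → ℝ}

theorem sum_prod_pi_eq_one (hf1 : ∀ i, ∑ t, f i t = 1) :
    ∑ v : ∀ i, V i, ∏ i, f i (v i) = 1 := by
  rw [← Fintype.piFinset_univ, ← prod_univ_sum]
  simp [hf1]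

theorem sum_prod_pi_filter_forall_notMem [∀ i, DecidableEq (V i)]
    (hf1 : ∀ i, ∑ t, f i t = 1) (S : ∀ i, Finset (V i)) :
    ∑ v : (∀ i, V i) with ∀ i, v i ∉ S i, ∏ i, f i (v i) =
      ∏ i, (1 - ∑ t ∈ S i, f i t) := by
  have hcompl : ∀ i, 1 - ∑ t ∈ S i, f i t = ∑ t ∈ (S i)ᶜ, f i t := fun i => by
    rw [← hf1 i, ← sum_compl_add_sum (S i), add_sub_cancel_right]
  simp_rw [hcompl, prod_univ_sum]
  congr 1
  ext v
  simp [Fintype.mem_piFinset]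

theorem sum_prod_pi_filter_exists_mem [∀ i, DecidableEq (V i)]
    (hf1 : ∀ i, ∑ t, f i t = 1) (S : ∀ i, Finset (V i)) :
    ∑ v : (∀ i, V i) with ∃ i, v i ∈ S i, ∏ i, f i (v i) =
      1 - ∏ i, (1 - ∑ t ∈ S i, f i t) := by
  rw [← sum_prod_pi_filter_forall_notMem hf1 S, ← sum_prod_pi_eq_one hf1, eq_sub_iff_add_eq,
    ← sum_filter_add_sum_filter_not univ (fun v : ∀ i, V i => ∃ i, v i ∈ S i)]
  simp only [not_exists]

theorem sum_mul_interim_eq_sum_filter [∀ i, DecidableEq (V i)] (x : (∀ j, V j) → ι → ℝ)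
    {i : ι} {y : V i → ℝ}
    (hy : ∀ t, y t = ∑ v : ∀ j, V j,
      if v i = t then (∏ j ∈ univ.erase i, f j (v j)) * x v i else 0)
    (s : Finset (V i)) :
    ∑ t ∈ s, f i t * y t = ∑ v : (∀ j, V j) with v i ∈ s, (∏ j, f j (v j)) * x v i := by
  have hterm : ∀ t, f i t * y t =
      ∑ v : ∀ j, V j, if v i = t then (∏ j, f j (v j)) * x v i else 0 := fun t => by
    rw [hy, mul_sum]
    refine sum_congr rfl fun v _ => ?_
    split_ifs with hvt
    · rw [← hvt, ← mul_assoc, mul_prod_erase univ (fun j => f j (v j)) (mem_univ i)]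
    · rw [mul_zero]
  simp_rw [hterm]
  rw [sum_comm, sum_filter]
  refine sum_congr rfl fun v _ => ?_
  rw [sum_ite_eq]

end Profiles


open Finset in
/-- Border's necessary condition: for any ex post single-item allocation rule `x`
(nonnegative winning probabilities summing to at most 1 on each type profile) with
induced interim rule `y`, and any sets of distinguished types `S i`, the probability
that the winner has a distinguished type is at most the probability that some bidder
has a distinguished type. -/
theorem border_inequality (n : ℕ) (V : Fin n → Type*) [∀ i, Fintype (V i)]
    [∀ i, DecidableEq (V i)]
    (f : ∀ i, V i → ℝ) (hf : ∀ i t, 0 ≤ f i t) (hf1 : ∀ i, ∑ t, f i t = 1)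
    (x : (∀ i, V i) → Fin n → ℝ) (hx : ∀ v i, 0 ≤ x v i) (hx1 : ∀ v, ∑ i, x v i ≤ 1)
    (y : ∀ i, V i → ℝ)
    (hy : ∀ i t, y i t =
      ∑ v : ∀ j, V j, if v i = t then (∏ j ∈ univ.erase i, f j (v j)) * x v i else 0)
    (S : ∀ i, Finset (V i)) :
    ∑ i, ∑ t ∈ S i, f i t * y i t ≤ 1 - ∏ i, (1 - ∑ t ∈ S i, f i t) := by
  rw [sum_congr rfl fun i _ => sum_mul_interim_eq_sum_filter x (hy i) (S i),
    ← sum_prod_pi_filter_exists_mem hf1 S]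
  exact sum_sum_filter_mul_le_sum_filter_exists _
    (fun v => prod_nonneg fun j _ => hf j (v j)) hx hx1
end

section
/- Let a = (a₀,…,aₙ) ∈ ℝ^{n+1} with a(x) = a₀ + ∑_{i=1}^n aᵢ(−1)^{1+xᵢ} nonvanishing on {0,1}ⁿ, and let h(x) = sign⁺(a(x)). Then for every f : {0,1}ⁿ → [0,1] with f ≠ h, the Chow vector of h strictly dominates: ∑_{i=0}^n aᵢ·ĥ(i) > ∑_{i=0}^n aᵢ·f̂(i). Consequently the Chow vector of h is a vertex of the polytope Cₙ of feasible Chow vectors. -/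
/-!
Both sides are `2⁻ⁿ ∑ₓ g(x) a(x)` for `g = f, h`. Pointwise, `y ↦ y · a(x)` on `[0,1]` is
maximised exactly at `y = sign⁺(a(x))` because `a(x) ≠ 0`, so `h` wins in every term and
strictly at any point where `f` differs from `h`.
-/

open Finset

namespace HalfspaceChow

lemma mul_le_ite_nonneg_mul {t y : ℝ} (hy : y ∈ Set.Icc (0 : ℝ) 1) :
    y * t ≤ (if 0 ≤ t then 1 else 0) * t := by
  split_ifs with ht
  · nlinarith [hy.2]
  · nlinarith [hy.1]

lemma mul_lt_ite_nonneg_mul {t y : ℝ} (ht : t ≠ 0) (hy : y ∈ Set.Icc (0 : ℝ) 1)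
    (hne : y ≠ if 0 ≤ t then 1 else 0) :
    y * t < (if 0 ≤ t then 1 else 0) * t := by
  split_ifs at hne ⊢ with hnn
  · have hy1 : y < 1 := lt_of_le_of_ne hy.2 hne
    nlinarith [lt_of_le_of_ne hnn ht.symm]
  · have hy0 : 0 < y := lt_of_le_of_ne hy.1 hne.symm
    nlinarith [not_le.mp hnn]

theorem sum_mul_lt_sum_ite_nonneg_mul {X : Type*} [Fintype X] {A f : X → ℝ}
    (hA : ∀ x, A x ≠ 0) (hf : ∀ x, f x ∈ Set.Icc (0 : ℝ) 1)
    (hne : f ≠ fun x => if 0 ≤ A x then 1 else 0) :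
    ∑ x, f x * A x < ∑ x, (if 0 ≤ A x then 1 else 0) * A x := by
  obtain ⟨x₀, hx₀⟩ := Function.ne_iff.mp hne
  exact sum_lt_sum (fun x _ => mul_le_ite_nonneg_mul (hf x))
    ⟨x₀, mem_univ x₀, mul_lt_ite_nonneg_mul (hA x₀) (hf x₀) hx₀⟩

lemma sum_mul_sum_mul_comm {X ι : Type*} [Fintype X] [Fintype ι] (c : ι → ℝ)
    (χ : ι → X → ℝ) (g : X → ℝ) :
    ∑ i, c i * ∑ x, g x * χ i x = ∑ x, g x * ∑ i, c i * χ i x := by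
  simp_rw [mul_sum]
  rw [sum_comm]
  exact sum_congr rfl fun x _ => sum_congr rfl fun i _ => by ring

lemma chow_pairing_eq (n : ℕ) (a : Fin (n + 1) → ℝ) (g : (Fin n → Bool) → ℝ) :
    a 0 * ((∑ x : Fin n → Bool, g x) / 2 ^ n) +
        ∑ i : Fin n, a i.succ * ((∑ x : Fin n → Bool, g x * (if x i then 1 else -1)) / 2 ^ n) =
      (∑ x : Fin n → Bool,
        g x * (a 0 + ∑ i : Fin n, a i.succ * (if x i then 1 else -1))) / 2 ^ n := by
  simp only [mul_div_assoc', ← sum_div, ← add_div, mul_add, sum_add_distrib, ← sum_mul]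
  rw [sum_mul_sum_mul_comm (fun i : Fin n => a i.succ) (fun i x => if x i then 1 else -1) g]
  ring

end HalfspaceChow

open HalfspaceChow in
/-- If the affine form `a(x) = a₀ + ∑ᵢ aᵢ(−1)^{1+xᵢ}` never vanishes on `{0,1}ⁿ` and
`h = sign⁺ ∘ a`, then for every bounded `f ≠ h`, the linear functional given by `a`
on Chow vectors is strictly larger at `h` than at `f` (so the Chow vector of `h` is a
vertex of the Chow polytope). -/
theorem halfspace_chow_vertex (n : ℕ) (a : Fin (n + 1) → ℝ)
    (hnv : ∀ x : Fin n → Bool, a 0 + ∑ i : Fin n, a i.succ * (if x i then 1 else -1) ≠ 0)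
    (h : (Fin n → Bool) → ℝ)
    (hh : ∀ x, h x =
      if 0 ≤ a 0 + ∑ i : Fin n, a i.succ * (if x i then 1 else -1) then 1 else 0)
    (f : (Fin n → Bool) → ℝ) (hf : ∀ x, 0 ≤ f x ∧ f x ≤ 1) (hfh : f ≠ h) :
    a 0 * ((∑ x : Fin n → Bool, f x) / 2 ^ n) +
        ∑ i : Fin n, a i.succ * ((∑ x : Fin n → Bool, f x * (if x i then 1 else -1)) / 2 ^ n) <
      a 0 * ((∑ x : Fin n → Bool, h x) / 2 ^ n) +
        ∑ i : Fin n, a i.succ * ((∑ x : Fin n → Bool, h x * (if x i then 1 else -1)) / 2 ^ n) := by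
  obtain rfl : h = _ := funext hh
  rw [chow_pairing_eq, chow_pairing_eq]
  exact div_lt_div_of_pos_right (sum_mul_lt_sum_ite_nonneg_mul hnv hf hfh) (by positivity)
end

section
/- In the Boolean public project setting with values a₁,…,aₙ ≥ 0 and uniform independent types (each player i has value aᵢ or 0 with probability 1/2 each), the maximum over functions f : {0,1}ⁿ → [0,1] of ∑_{i=1}^n (aᵢ/2)·(E[f(x) | xᵢ = 1] − E[f(x) | xᵢ = 0]) equals K(a)/2, where K(a) = E_{y ~ uniform on {−1,1}ⁿ}[|∑ᵢ aᵢyᵢ|]. -/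
/-!
Since each half-cube `{x | xᵢ = b}` has `2ⁿ / 2` points, the objective is the linear functional
`f ↦ 2⁻ⁿ ∑ₓ f(x) g(x)` with `g(x) = ∑ᵢ aᵢ (±1)`. Over `0 ≤ f ≤ 1` it is maximised by the
indicator of `{g ≥ 0}`, with value `2⁻ⁿ ∑ₓ g(x)⁺`, and since every coordinate is balanced on the
cube, `∑ₓ g(x) = 0`, so `∑ₓ g(x)⁺ = ½ ∑ₓ |g(x)|`.
-/

open Finset

section PosPart

variable {α : Type*} [Fintype α]

lemma isGreatest_sum_mul_posPart (g : α → ℝ) :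
    IsGreatest {v | ∃ f : α → ℝ, (∀ x, 0 ≤ f x ∧ f x ≤ 1) ∧ v = ∑ x, f x * g x}
      (∑ x, (g x)⁺) := by
  refine ⟨⟨fun x => if 0 ≤ g x then 1 else 0, fun x => by dsimp only; split_ifs <;> norm_num,
    sum_congr rfl fun x _ => by rw [posPart_eq_ite, ite_mul, one_mul, zero_mul]⟩, ?_⟩
  rintro v ⟨f, hf, rfl⟩
  exact sum_le_sum fun x _ =>
    (mul_le_mul_of_nonneg_left (le_posPart (g x)) (hf x).1).trans
      (mul_le_of_le_one_left (posPart_nonneg (g x)) (hf x).2)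

lemma sum_posPart_eq_half_sum_abs {g : α → ℝ} (hg : ∑ x, g x = 0) :
    ∑ x, (g x)⁺ = (∑ x, |g x|) / 2 := by
  have h_abs (x : α) : |g x| = 2 * (g x)⁺ - g x := by
    linarith [posPart_add_negPart (g x), posPart_sub_negPart (g x)]
  simp only [h_abs, sum_sub_distrib, ← mul_sum, hg]
  ring

end PosPart

section BooleanCube

variable {ι : Type*} [Fintype ι] [DecidableEq ι]

noncomputable def condMean (f : (ι → Bool) → ℝ) (i : ι) (b : Bool) : ℝ :=
  (∑ x with x i = b, f x) / #{x : ι → Bool | x i = b}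

def signedSum (a : ι → ℝ) (x : ι → Bool) : ℝ :=
  ∑ i, a i * if x i then 1 else -1

lemma card_filter_apply_true_eq_card_filter_apply_false (i : ι) :
    #{x : ι → Bool | x i = true} = #{x : ι → Bool | x i = false} := by
  let flip (x : ι → Bool) := Function.update x i (!x i)
  have flip_flip (x : ι → Bool) : flip (flip x) = x := by simp [flip]
  exact card_nbij' flip flip (fun x => by simp [flip]) (fun x => by simp [flip])
    (fun x _ => flip_flip x) (fun x _ => flip_flip x)

lemma cast_card_filter_apply_eq (i : ι) (b : Bool) :
    (#{x : ι → Bool | x i = b} : ℝ) = 2 ^ Fintype.card ι / 2 := by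
  have h_eq := card_filter_apply_true_eq_card_filter_apply_false i
  have h_add :
      #{x : ι → Bool | x i = true} + #{x : ι → Bool | x i = false} = 2 ^ Fintype.card ι := by
    simpa using card_filter_add_card_filter_not (s := univ) (fun x : ι → Bool => x i = true)
  cases b <;> · rify at h_eq h_add; linarith

lemma sum_mul_sign_apply (f : (ι → Bool) → ℝ) (i : ι) :
    ∑ x, f x * (if x i then 1 else -1) = ∑ x with x i = true, f x - ∑ x with x i = false, f x := by
  simp only [mul_ite, mul_one, mul_neg_one, sum_ite, sum_neg_distrib, Bool.not_eq_true,
    ← sub_eq_add_neg]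

lemma condMean_true_sub_condMean_false (f : (ι → Bool) → ℝ) (i : ι) :
    condMean f i true - condMean f i false =
      2 * (∑ x, f x * if x i then 1 else -1) / 2 ^ Fintype.card ι := by
  rw [sum_mul_sign_apply, condMean, condMean, cast_card_filter_apply_eq,
    cast_card_filter_apply_eq]
  field_simp

lemma sum_mul_condMean_sub (a : ι → ℝ) (f : (ι → Bool) → ℝ) :
    ∑ i, a i / 2 * (condMean f i true - condMean f i false) =
      (∑ x, f x * signedSum a x) / 2 ^ Fintype.card ι := by
  simp only [condMean_true_sub_condMean_false, signedSum, mul_sum, sum_div]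
  rw [sum_comm]
  refine sum_congr rfl fun x _ => sum_congr rfl fun i _ => ?_
  ring

lemma sum_signedSum_eq_zero (a : ι → ℝ) : ∑ x, signedSum a x = 0 := by
  simp only [signedSum]
  rw [sum_comm]
  refine sum_eq_zero fun i _ => ?_
  rw [sum_mul_sign_apply (fun _ => a i), sum_const, sum_const,
    card_filter_apply_true_eq_card_filter_apply_false, sub_self]

end BooleanCube

theorem public_project_opt_rev_general (n : ℕ) (a : Fin n → ℝ) :
    IsGreatest
      {v : ℝ | ∃ f : (Fin n → Bool) → ℝ, (∀ x, 0 ≤ f x ∧ f x ≤ 1) ∧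
        v = ∑ i : Fin n, (a i / 2) *
          ((∑ x ∈ Finset.univ.filter fun x : Fin n → Bool => x i = true, f x) /
              ((Finset.univ.filter fun x : Fin n → Bool => x i = true).card : ℝ) -
            (∑ x ∈ Finset.univ.filter fun x : Fin n → Bool => x i = false, f x) /
              ((Finset.univ.filter fun x : Fin n → Bool => x i = false).card : ℝ))}
      (((∑ y : Fin n → Bool, |∑ i, a i * (if y i then 1 else -1)|) / 2 ^ n) / 2) := by
  obtain ⟨h_attained, h_upper⟩ := isGreatest_sum_mul_posPart (signedSum a)
  have h_obj (f : (Fin n → Bool) → ℝ) :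
      ∑ i, a i / 2 * (condMean f i true - condMean f i false) =
        (∑ x, f x * signedSum a x) / 2 ^ n := by
    rw [sum_mul_condMean_sub, Fintype.card_fin]
  have h_value : (∑ y : Fin n → Bool, |signedSum a y|) / 2 ^ n / 2 =
      (∑ x, (signedSum a x)⁺) / 2 ^ n := by
    rw [sum_posPart_eq_half_sum_abs (sum_signedSum_eq_zero a), div_right_comm]
  refine ⟨?_, ?_⟩
  · obtain ⟨f, hf, hv⟩ := h_attained
    exact ⟨f, hf, h_value.trans (hv ▸ (h_obj f).symm)⟩
  · rintro _ ⟨f, hf, rfl⟩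
    refine ((h_obj f).le.trans ?_).trans_eq h_value.symm
    exact div_le_div_of_nonneg_right (h_upper ⟨f, hf, rfl⟩) (by positivity)

/-- Optimal revenue for the Boolean public project problem: the maximum over
`f : {0,1}ⁿ → [0,1]` of `∑ᵢ (aᵢ/2)(E[f | xᵢ = 1] − E[f | xᵢ = 0])` equals `K(a)/2`,
where `K(a)` is the Khintchine constant of `a`. -/
theorem public_project_opt_rev (n : ℕ) (a : Fin n → ℝ) (ha : ∀ i, 0 ≤ a i) :
    IsGreatest
      {v : ℝ | ∃ f : (Fin n → Bool) → ℝ, (∀ x, 0 ≤ f x ∧ f x ≤ 1) ∧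
        v = ∑ i : Fin n, (a i / 2) *
          ((∑ x ∈ Finset.univ.filter fun x : Fin n → Bool => x i = true, f x) /
              ((Finset.univ.filter fun x : Fin n → Bool => x i = true).card : ℝ) -
            (∑ x ∈ Finset.univ.filter fun x : Fin n → Bool => x i = false, f x) /
              ((Finset.univ.filter fun x : Fin n → Bool => x i = false).card : ℝ))}
      (((∑ y : Fin n → Bool, |∑ i, a i * (if y i then 1 else -1)|) / 2 ^ n) / 2) :=
  public_project_opt_rev_general n a
end
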